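/- arXiv:1612.05913 — 5 statements merged into one kernel-verified Lean document; each statement's English description precedes it below -/
import Mathlib

section
/- (Improved discrete Hardy inequality) For every finitely supported function φ : ℕ → ℝ with φ(0) = 0, one has ∑_{n=1}^∞ (φ(n) − φ(n−1))² ≥ ∑_{n=1}^∞ w(n) φ(n)², where w : {1,2,3,...} → ℝ is defined by w(n) = 2 − ((1 + 1/n)^{1/2} + (1 − 1/n)^{1/2}) for n ≥ 1. -/
/-- The improved Hardy weight `w(n) = 2 - ((1 + 1/n)^{1/2} + (1 - 1/n)^{1/2})`. -/
noncomputable def hardyWeight (n : ℕ) : ℝ :=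
  2 - (Real.sqrt (1 + 1 / (n : ℝ)) + Real.sqrt (1 - 1 / (n : ℝ)))

private lemma sqrt_mul_succ (m : ℝ) (hm : 1 ≤ m) :
    m * Real.sqrt (1 + 1 / m) = Real.sqrt m * Real.sqrt (m + 1) := by
  have hm0 : 0 < m := lt_of_lt_of_le one_pos hm
  rw [← Real.sqrt_mul hm0.le]
  have h : m * (m + 1) = m ^ 2 * (1 + 1 / m) := by field_simp
  rw [h, Real.sqrt_mul (by positivity), Real.sqrt_sq hm0.le]

private lemma sqrt_mul_pred (m : ℝ) (hm : 1 ≤ m) :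
    m * Real.sqrt (1 - 1 / m) = Real.sqrt m * Real.sqrt (m - 1) := by
  have hm0 : 0 < m := lt_of_lt_of_le one_pos hm
  rw [← Real.sqrt_mul hm0.le]
  have h : m * (m - 1) = m ^ 2 * (1 - 1 / m) := by field_simp
  rw [h, Real.sqrt_mul (by positivity), Real.sqrt_sq hm0.le]

private lemma finite_hardy (φ : ℕ → ℝ) (hφ0 : φ 0 = 0) (N : ℕ)
    (hN : ∀ n, N ≤ n → φ n = 0) :
    ∑ n ∈ Finset.range N, hardyWeight (n + 1) * φ (n + 1) ^ 2
      ≤ ∑ n ∈ Finset.range N, (φ (n + 1) - φ n) ^ 2 := by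
  set u : ℕ → ℝ := fun n => Real.sqrt n with hu
  set ψ : ℕ → ℝ := fun n => if n = 0 then 0 else φ n / u n with hψ
  set t : ℕ → ℝ := fun n => ψ n ^ 2 * u n * (u n - u (n + 1)) with ht
  have hφψ : ∀ n, φ n = u n * ψ n := by
    intro n
    rcases Nat.eq_zero_or_pos n with h | h
    · simp [h, hψ, hφ0]
    · have hun : u n ≠ 0 := by
        have : (0 : ℝ) < n := by exact_mod_cast h
        simp only [hu]
        exact ne_of_gt (Real.sqrt_pos.mpr this)
      simp only [hψ, if_neg (Nat.pos_iff_ne_zero.mp h)]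
      field_simp
  -- the weight identity: w(n+1) * (n+1) = u(n+1) * (2 u(n+1) - u(n) - u(n+2))
  have hw : ∀ n : ℕ, hardyWeight (n + 1) * φ (n + 1) ^ 2
      = ψ (n + 1) ^ 2 * (u (n + 1) * (2 * u (n + 1) - u n - u (n + 2))) := by
    intro n
    set m : ℝ := (n : ℝ) + 1 with hm
    have hm1 : (1 : ℝ) ≤ m := by rw [hm]; have : (0:ℝ) ≤ (n:ℝ) := Nat.cast_nonneg n; linarith
    have hm0 : (0 : ℝ) < m := lt_of_lt_of_le one_pos hm1
    have hcast1 : ((n + 1 : ℕ) : ℝ) = m := by push_cast [hm]; ring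
    have hcast2 : ((n + 2 : ℕ) : ℝ) = m + 1 := by push_cast [hm]; ring
    have hcast0 : ((n : ℕ) : ℝ) = m - 1 := by push_cast [hm]; ring
    have huu : u (n + 1) ^ 2 = m := by
      simp only [hu, hcast1]; exact Real.sq_sqrt hm0.le
    have hφ2 : φ (n + 1) ^ 2 = m * ψ (n + 1) ^ 2 := by
      rw [hφψ (n + 1)]; rw [mul_pow, huu]
    rw [hφ2]
    have hWm : hardyWeight (n + 1) * m
        = u (n + 1) * (2 * u (n + 1) - u n - u (n + 2)) := by
      unfold hardyWeight
      rw [hcast1]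
      have e1 : m * Real.sqrt (1 + 1 / m) = Real.sqrt m * Real.sqrt (m + 1) :=
        sqrt_mul_succ m hm1
      have e2 : m * Real.sqrt (1 - 1 / m) = Real.sqrt m * Real.sqrt (m - 1) :=
        sqrt_mul_pred m hm1
      have hmm : Real.sqrt m * Real.sqrt m = m := Real.mul_self_sqrt hm0.le
      simp only [hu, hcast0, hcast1, hcast2]
      nlinarith [e1, e2, hmm]
    nlinarith [hWm]
  -- per-term identity
  have key : ∀ n : ℕ, (φ (n + 1) - φ n) ^ 2 - hardyWeight (n + 1) * φ (n + 1) ^ 2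
      = u n * u (n + 1) * (ψ (n + 1) - ψ n) ^ 2 + (t n - t (n + 1)) := by
    intro n
    rw [hw n, hφψ n, hφψ (n + 1)]
    simp only [ht]
    ring
  have ht0 : t 0 = 0 := by simp [ht, hu]
  have htN : t N = 0 := by
    rcases Nat.eq_zero_or_pos N with h | h
    · rw [h, ht0]
    · have : ψ N = 0 := by
        simp only [hψ, if_neg (Nat.pos_iff_ne_zero.mp h), hN N le_rfl, zero_div]
      simp [ht, this]
  have tele : ∑ n ∈ Finset.range N, (t n - t (n + 1)) = t 0 - t N :=
    Finset.sum_range_sub' t N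
  have main : ∑ n ∈ Finset.range N, (φ (n + 1) - φ n) ^ 2
      - ∑ n ∈ Finset.range N, hardyWeight (n + 1) * φ (n + 1) ^ 2
      = ∑ n ∈ Finset.range N, u n * u (n + 1) * (ψ (n + 1) - ψ n) ^ 2 := by
    rw [← Finset.sum_sub_distrib]
    calc ∑ n ∈ Finset.range N, ((φ (n + 1) - φ n) ^ 2 - hardyWeight (n + 1) * φ (n + 1) ^ 2)
        = ∑ n ∈ Finset.range N,
            (u n * u (n + 1) * (ψ (n + 1) - ψ n) ^ 2 + (t n - t (n + 1))) := by
          exact Finset.sum_congr rfl fun n _ => key n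
      _ = ∑ n ∈ Finset.range N, u n * u (n + 1) * (ψ (n + 1) - ψ n) ^ 2
            + ∑ n ∈ Finset.range N, (t n - t (n + 1)) := Finset.sum_add_distrib
      _ = _ := by rw [tele, ht0, htN]; ring
  have hnn : 0 ≤ ∑ n ∈ Finset.range N, u n * u (n + 1) * (ψ (n + 1) - ψ n) ^ 2 := by
    apply Finset.sum_nonneg
    intro n _
    have h1 : 0 ≤ u n := Real.sqrt_nonneg _
    have h2 : 0 ≤ u (n + 1) := Real.sqrt_nonneg _
    positivity
  linarith [main, hnn]

/-- **Improved discrete Hardy inequality.** For every finitely supported `φ : ℕ → ℝ` with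
`φ 0 = 0`, one has `∑_{n=1}^∞ (φ(n) - φ(n-1))² ≥ ∑_{n=1}^∞ w(n) φ(n)²`. -/
theorem improved_discrete_hardy (φ : ℕ → ℝ) (hφ : (Function.support φ).Finite)
    (hφ0 : φ 0 = 0) :
    ∑' n : ℕ, (φ (n + 1) - φ n) ^ 2 ≥ ∑' n : ℕ, hardyWeight (n + 1) * φ (n + 1) ^ 2 := by
  obtain ⟨N, hN⟩ : ∃ N, ∀ n, N ≤ n → φ n = 0 := by
    refine ⟨hφ.toFinset.sup id + 1, fun n hn => ?_⟩
    by_contra h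
    have hmem : n ∈ hφ.toFinset := by simpa [Function.mem_support] using h
    have := Finset.le_sup (f := id) hmem
    simp only [id] at this
    omega
  have h1 : ∑' n : ℕ, (φ (n + 1) - φ n) ^ 2
      = ∑ n ∈ Finset.range N, (φ (n + 1) - φ n) ^ 2 := by
    apply tsum_eq_sum
    intro n hn
    have hn' : N ≤ n := by simpa using hn
    rw [hN _ hn', hN _ (le_trans hn' (Nat.le_succ n))]
    ring
  have h2 : ∑' n : ℕ, hardyWeight (n + 1) * φ (n + 1) ^ 2
      = ∑ n ∈ Finset.range N, hardyWeight (n + 1) * φ (n + 1) ^ 2 := by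
    apply tsum_eq_sum
    intro n hn
    have hn' : N ≤ n := by simpa using hn
    rw [hN _ (le_trans hn' (Nat.le_succ n))]
    ring
  rw [h1, h2]
  exact finite_hardy φ hφ0 N hN
end

section
/- The weight w defined by w(n) = 2 − ((1 + 1/n)^{1/2} + (1 − 1/n)^{1/2}) satisfies w(n) > 1/(2n)² for every n ∈ ℕ, n ≥ 1; i.e., w is strictly greater than the classical Hardy weight w_H(n) = 1/(2n)². -/
/-- The improved Hardy weight `w(n) = 2 - ((1 + 1/n)^{1/2} + (1 - 1/n)^{1/2})` is strictly
greater than the classical Hardy weight `w_H(n) = 1/(2n)²` for every `n ≥ 1`. -/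
theorem hardyWeight_gt_classical (n : ℕ) (hn : 1 ≤ n) :
    2 - (Real.sqrt (1 + 1 / (n : ℝ)) + Real.sqrt (1 - 1 / (n : ℝ)))
      > 1 / (2 * (n : ℝ)) ^ 2 := by
  have hn' : (1 : ℝ) ≤ (n : ℝ) := by exact_mod_cast hn
  have hnpos : (0 : ℝ) < (n : ℝ) := by linarith
  set x : ℝ := 1 / (n : ℝ) with hxdef
  have hx0 : 0 < x := by positivity
  have hx1 : x ≤ 1 := by
    rw [hxdef]
    rw [div_le_one hnpos]; linarith
  have h1x : (0:ℝ) ≤ 1 + x := by linarith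
  have h1x' : (0:ℝ) ≤ 1 - x := by linarith
  have hA : Real.sqrt (1 + x) ^ 2 = 1 + x := Real.sq_sqrt h1x
  have hB : Real.sqrt (1 - x) ^ 2 = 1 - x := Real.sq_sqrt h1x'
  have hA0 : 0 ≤ Real.sqrt (1 + x) := Real.sqrt_nonneg _
  have hB0 : 0 ≤ Real.sqrt (1 - x) := Real.sqrt_nonneg _
  have hAB : Real.sqrt (1 + x) * Real.sqrt (1 - x) = Real.sqrt (1 - x ^ 2) := by
    rw [← Real.sqrt_mul h1x]; ring_nf
  -- key inner inequality
  have hrhs : (0:ℝ) < 1 - x ^ 2 / 2 + x ^ 4 / 32 := by nlinarith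
  have hkey : Real.sqrt (1 - x ^ 2) < 1 - x ^ 2 / 2 + x ^ 4 / 32 := by
    rw [show (1 - x ^ 2 / 2 + x ^ 4 / 32) = Real.sqrt ((1 - x ^ 2 / 2 + x ^ 4 / 32) ^ 2)
      from (Real.sqrt_sq hrhs.le).symm]
    apply Real.sqrt_lt_sqrt (by nlinarith)
    have hx2le : x ^ 2 ≤ 1 := by nlinarith
    have h4 : (0:ℝ) < x ^ 4 := by positivity
    have h64 : x ^ 6 ≤ x ^ 4 := by nlinarith
    nlinarith [sq_nonneg (x ^ 4), h4, h64]
  have hsum : Real.sqrt (1 + x) + Real.sqrt (1 - x) < 2 - x ^ 2 / 4 := by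
    have hpos : (0:ℝ) < 2 - x ^ 2 / 4 := by nlinarith
    have hsq : (Real.sqrt (1 + x) + Real.sqrt (1 - x)) ^ 2 < (2 - x ^ 2 / 4) ^ 2 := by
      have heq : (Real.sqrt (1 + x) + Real.sqrt (1 - x)) ^ 2
          = 2 + 2 * Real.sqrt (1 - x ^ 2) := by
        rw [add_sq, hA, hB, mul_assoc, hAB]; ring
      rw [heq]
      nlinarith [hkey]
    exact lt_of_pow_lt_pow_left₀ 2 hpos.le hsq
  have hx2 : 1 / (2 * (n : ℝ)) ^ 2 = x ^ 2 / 4 := by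
    rw [hxdef]; field_simp; ring
  rw [hx2]
  linarith
end

section
/- (Classical discrete Hardy inequality, p = 2) For every sequence a : ℕ → ℝ of non-negative real numbers, ∑_{n=1}^∞ a(n)² ≥ (1/2)² · ∑_{n=1}^∞ ((a(1) + a(2) + ⋯ + a(n))/n)². -/
/-!
Write `S n = x 0 + ⋯ + x (n - 1)` and `b n = S (n + 1) / (n + 1)`. Substituting `x n = (n + 1) b n - S n`
gives `b n ^ 2 - 2 x n b n ≤ S n ^ 2 / n - S (n + 1) ^ 2 / (n + 1)`, since the difference is
`n (S n / n - b n) ^ 2`. Summing, the right side telescopes to a non-positive quantity, so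
`∑ b n ^ 2 ≤ 2 ∑ x n b n ≤ 2 √(∑ x n ^ 2) √(∑ b n ^ 2)` by Cauchy–Schwarz, whence
`∑ b n ^ 2 ≤ 4 ∑ x n ^ 2` for every finite range.
-/

open Finset

noncomputable def cesaroMean (x : ℕ → ℝ) (n : ℕ) : ℝ :=
  (∑ i ∈ range (n + 1), x i) / (n + 1)

lemma sq_cesaroMean_sub_le (x : ℕ → ℝ) (n : ℕ) :
    cesaroMean x n ^ 2 - 2 * (x n * cesaroMean x n) ≤
      (∑ i ∈ range n, x i) ^ 2 / n - (∑ i ∈ range (n + 1), x i) ^ 2 / (n + 1) := by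
  rcases Nat.eq_zero_or_pos n with rfl | hn
  · norm_num [cesaroMean]
    linarith
  set S := ∑ i ∈ range n, x i
  set b := cesaroMean x n
  have hn' : (0 : ℝ) < n := Nat.cast_pos.mpr hn
  have hS : ∑ i ∈ range (n + 1), x i = (n + 1) * b := by
    simp only [b, cesaroMean]
    field_simp
  have hx : x n = (n + 1) * b - S := by
    rw [← hS, sum_range_succ]
    ring
  have hS' : (∑ i ∈ range (n + 1), x i) ^ 2 / (n + 1) = (n + 1) * b ^ 2 := by
    rw [hS]
    field_simp
  have key : b ^ 2 - 2 * (x n * b) - (S ^ 2 / n - (n + 1) * b ^ 2) = -(n * (S / n - b) ^ 2) := by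
    rw [hx]
    field_simp
    ring
  rw [hS']
  linarith [mul_nonneg hn'.le (sq_nonneg (S / n - b))]

lemma sum_sq_cesaroMean_le_two_mul (x : ℕ → ℝ) (N : ℕ) :
    ∑ n ∈ range N, cesaroMean x n ^ 2 ≤ 2 * ∑ n ∈ range N, x n * cesaroMean x n := by
  set φ : ℕ → ℝ := fun n => (∑ i ∈ range n, x i) ^ 2 / n
  have telescope : ∑ n ∈ range N, (cesaroMean x n ^ 2 - 2 * (x n * cesaroMean x n)) ≤ φ 0 - φ N := by
    rw [← sum_range_sub']
    refine sum_le_sum fun n _ => ?_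
    simpa [φ] using sq_cesaroMean_sub_le x n
  have hφ0 : φ 0 = 0 := by simp [φ]
  have hφN : 0 ≤ φ N := by positivity
  rw [sum_sub_distrib, ← mul_sum] at telescope
  linarith

lemma sum_sq_cesaroMean_le (x : ℕ → ℝ) (N : ℕ) :
    ∑ n ∈ range N, cesaroMean x n ^ 2 ≤ 4 * ∑ n ∈ range N, x n ^ 2 := by
  set B := ∑ n ∈ range N, cesaroMean x n ^ 2
  set X := ∑ n ∈ range N, x n ^ 2
  set T := ∑ n ∈ range N, x n * cesaroMean x n
  have hB : 0 ≤ B := sum_nonneg fun n _ => sq_nonneg _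
  have hBT : B ≤ 2 * T := sum_sq_cesaroMean_le_two_mul x N
  have cauchySchwarz : T ^ 2 ≤ X * B := sum_mul_sq_le_sq_mul_sq _ _ _
  have hX : 0 ≤ X := sum_nonneg fun n _ => sq_nonneg _
  rcases hB.eq_or_lt with hB0 | hBpos
  · rw [← hB0]
    positivity
  · -- `B ^ 2 ≤ (2 T) ^ 2 ≤ 4 X B`
    exact le_of_mul_le_mul_right (by nlinarith) hBpos

lemma ENNReal.ofReal_sum_le {ι : Type*} (s : Finset ι) (f : ι → ℝ) :
    ENNReal.ofReal (∑ i ∈ s, f i) ≤ ∑ i ∈ s, ENNReal.ofReal (f i) :=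
  le_sum_of_subadditive _ ENNReal.ofReal_zero.le (fun _ _ => ENNReal.ofReal_add_le) _ _

lemma ENNReal.tsum_ofReal_le_mul_of_sum_range_le {f g : ℕ → ℝ} {c : ℝ} (hf : ∀ n, 0 ≤ f n)
    (hc : 0 ≤ c) (h : ∀ N, ∑ n ∈ range N, f n ≤ c * ∑ n ∈ range N, g n) :
    ∑' n, ENNReal.ofReal (f n) ≤ ENNReal.ofReal c * ∑' n, ENNReal.ofReal (g n) := by
  refine ENNReal.tsum_le_of_sum_range_le fun N => ?_
  calc ∑ n ∈ range N, ENNReal.ofReal (f n)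
      = ENNReal.ofReal (∑ n ∈ range N, f n) := (ENNReal.ofReal_sum_of_nonneg fun n _ => hf n).symm
    _ ≤ ENNReal.ofReal (c * ∑ n ∈ range N, g n) := ENNReal.ofReal_le_ofReal (h N)
    _ = ENNReal.ofReal c * ENNReal.ofReal (∑ n ∈ range N, g n) := ENNReal.ofReal_mul hc
    _ ≤ ENNReal.ofReal c * ∑' n, ENNReal.ofReal (g n) := by
      gcongr
      exact (ENNReal.ofReal_sum_le _ _).trans (ENNReal.sum_le_tsum _)

theorem classical_discrete_hardy_two_general (a : ℕ → ℝ) :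
    ∑' n : ℕ, ENNReal.ofReal (a (n + 1) ^ 2)
      ≥ (1 / 2) ^ 2 *
        ∑' n : ℕ, ENNReal.ofReal
          (((∑ i ∈ Finset.range (n + 1), a (i + 1)) / (n + 1 : ℝ)) ^ 2) := by
  have hardy := ENNReal.tsum_ofReal_le_mul_of_sum_range_le (fun n => sq_nonneg _)
    zero_le_four (sum_sq_cesaroMean_le fun i => a (i + 1))
  calc (1 / 2) ^ 2 * ∑' n : ℕ, ENNReal.ofReal (cesaroMean (fun i => a (i + 1)) n ^ 2)
      ≤ (1 / 2) ^ 2 * (ENNReal.ofReal 4 * ∑' n : ℕ, ENNReal.ofReal (a (n + 1) ^ 2)) := by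
        gcongr
    _ = ∑' n : ℕ, ENNReal.ofReal (a (n + 1) ^ 2) := by
        rw [← mul_assoc, ENNReal.ofReal_ofNat, one_div, ← ENNReal.inv_pow]
        norm_num
        rw [ENNReal.inv_mul_cancel (by norm_num) (by norm_num), one_mul]

/-- **Classical discrete Hardy inequality (p = 2).** For every sequence of non-negative reals,
`∑_{n=1}^∞ a(n)² ≥ (1/2)² · ∑_{n=1}^∞ ((a(1) + ⋯ + a(n))/n)²`, in `[0, ∞]`. -/
theorem classical_discrete_hardy_two (a : ℕ → ℝ) (ha : ∀ n, 0 ≤ a n) :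
    ∑' n : ℕ, ENNReal.ofReal (a (n + 1) ^ 2)
      ≥ (1 / 2) ^ 2 *
        ∑' n : ℕ, ENNReal.ofReal
          (((∑ i ∈ Finset.range (n + 1), a (i + 1)) / (n + 1 : ℝ)) ^ 2) :=
  classical_discrete_hardy_two_general a
end

section
/- (Classical discrete Hardy inequality, general p) Let 1 < p < ∞. For every sequence a : ℕ → ℝ of non-negative real numbers, ∑_{n=1}^∞ a(n)^p ≥ ((p−1)/p)^p · ∑_{n=1}^∞ ((a(1) + a(2) + ⋯ + a(n))/n)^p. -/
/-!
Write `M n = (b 0 + ⋯ + b (n - 1)) / n`, so that `b n = (n + 1) M (n + 1) - n M n`. Young's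
inequality `p y x^(p-1) ≤ y^p + (p-1) x^p` at `x = M (n + 1)`, `y = M n` bounds
`(p-1) M (n+1)^p` by `p b n M (n+1)^(p-1)` up to the telescoping term `n M n^p - (n+1) M (n+1)^p`.
Summing, `(p-1) ∑ M^p ≤ p ∑ b M^(p-1)`, and Hölder bounds the right side by
`p (∑ b^p)^(1/p) (∑ M^p)^(1/q)`; dividing by the finite `(∑ M^p)^(1/q)` gives the finite
inequality, and the infinite one follows by taking suprema of partial sums.
-/

open Finset

namespace Real

lemma self_mul_rpow_sub_one {x p : ℝ} (hx : 0 ≤ x) (hp : p ≠ 0) : x * x ^ (p - 1) = x ^ p := by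
  rw [← rpow_one_add' hx (by simpa using hp), add_sub_cancel]

lemma mul_mul_rpow_sub_one_le {x y p : ℝ} (hp : 1 < p) (hx : 0 ≤ x) (hy : 0 ≤ y) :
    p * (y * x ^ (p - 1)) ≤ y ^ p + (p - 1) * x ^ p := by
  have hpq : p.HolderConjugate (p / (p - 1)) := .conjExponent hp
  have young := young_inequality_of_nonneg hy (rpow_nonneg hx (p - 1)) hpq
  rw [← rpow_mul hx, hpq.sub_one_mul_conj] at young
  have hp1 : 0 < p - 1 := by linarith
  calc p * (y * x ^ (p - 1)) ≤ p * (y ^ p / p + x ^ p / (p / (p - 1))) := by gcongr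
    _ = y ^ p + (p - 1) * x ^ p := by field_simp

lemma rpow_mul_le_of_mul_le_rpow_mul_rpow {p q c X Y : ℝ} (hpq : p.HolderConjugate q)
    (hc : 0 ≤ c) (hX : 0 ≤ X) (hY : 0 ≤ Y) (h : c * X ≤ Y ^ (1 / p) * X ^ (1 / q)) :
    c ^ p * X ≤ Y := by
  rcases hX.eq_or_lt with rfl | hX
  · simpa using hY
  have hsplit : X = X ^ (1 / p) * X ^ (1 / q) := by
    rw [← rpow_add hX, one_div, one_div, hpq.inv_add_inv_eq_one, rpow_one]
  have hroot : c * X ^ (1 / p) ≤ Y ^ (1 / p) := by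
    refine le_of_mul_le_mul_right ?_ (rpow_pos_of_pos hX (1 / q))
    rwa [mul_assoc, ← hsplit]
  have hp : 0 < p := hpq.pos
  calc c ^ p * X = (c * X ^ (1 / p)) ^ p := by
        rw [mul_rpow hc (by positivity), ← rpow_mul hX.le, one_div_mul_cancel hp.ne', rpow_one]
    _ ≤ (Y ^ (1 / p)) ^ p := by gcongr
    _ = Y := by rw [← rpow_mul hY, one_div_mul_cancel hp.ne', rpow_one]

end Real

namespace ENNReal

lemma tsum_ofReal_le_tsum_ofReal {f g : ℕ → ℝ} (hf : ∀ n, 0 ≤ f n) (hg : ∀ n, 0 ≤ g n)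
    (h : ∀ N, ∑ n ∈ range N, f n ≤ ∑ n ∈ range N, g n) :
    ∑' n, ENNReal.ofReal (f n) ≤ ∑' n, ENNReal.ofReal (g n) := by
  rw [ENNReal.tsum_eq_iSup_nat]
  refine iSup_le fun N => ?_
  calc ∑ n ∈ range N, ENNReal.ofReal (f n) = ENNReal.ofReal (∑ n ∈ range N, f n) :=
        (ofReal_sum_of_nonneg fun n _ => hf n).symm
    _ ≤ ENNReal.ofReal (∑ n ∈ range N, g n) := ofReal_le_ofReal (h N)
    _ = ∑ n ∈ range N, ENNReal.ofReal (g n) := ofReal_sum_of_nonneg fun n _ => hg n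
    _ ≤ ∑' n, ENNReal.ofReal (g n) := ENNReal.sum_le_tsum _

end ENNReal

/-- At `n = 0` this is the junk value `0 / 0 = 0`, which keeps `n * runningMean b n = ∑ i < n, b i`
true for every `n`. -/
noncomputable def runningMean (b : ℕ → ℝ) (n : ℕ) : ℝ := (∑ i ∈ range n, b i) / n

lemma natCast_mul_runningMean (b : ℕ → ℝ) (n : ℕ) :
    n * runningMean b n = ∑ i ∈ range n, b i := by
  rcases n.eq_zero_or_pos with rfl | hn
  · simp
  · exact mul_div_cancel₀ _ (by positivity)

lemma runningMean_succ (b : ℕ → ℝ) (n : ℕ) :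
    runningMean b (n + 1) = (∑ i ∈ range (n + 1), b i) / (n + 1 : ℝ) := by
  rw [runningMean, Nat.cast_succ]

section runningMean

variable {b : ℕ → ℝ}

lemma runningMean_nonneg (hb : ∀ n, 0 ≤ b n) (n : ℕ) : 0 ≤ runningMean b n :=
  div_nonneg (sum_nonneg fun i _ => hb i) n.cast_nonneg

lemma sub_one_mul_sum_runningMean_rpow_le {p : ℝ} (hp : 1 < p) (hb : ∀ n, 0 ≤ b n) (N : ℕ) :
    (p - 1) * ∑ n ∈ range N, runningMean b (n + 1) ^ p
      ≤ p * ∑ n ∈ range N, b n * runningMean b (n + 1) ^ (p - 1) := by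
  let M := runningMean b
  let g : ℕ → ℝ := fun n => n * M n ^ p
  have step (n : ℕ) :
      (p - 1) * M (n + 1) ^ p + (g (n + 1) - g n) ≤ p * (b n * M (n + 1) ^ (p - 1)) := by
    have hb_eq : b n = (n + 1 : ℕ) * M (n + 1) - n * M n := by
      rw [natCast_mul_runningMean, natCast_mul_runningMean, sum_range_succ, add_sub_cancel_left]
    have hx : M (n + 1) * M (n + 1) ^ (p - 1) = M (n + 1) ^ p :=
      Real.self_mul_rpow_sub_one (runningMean_nonneg hb (n + 1)) (by linarith)
    have young : p * (M n * M (n + 1) ^ (p - 1)) ≤ M n ^ p + (p - 1) * M (n + 1) ^ p :=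
      Real.mul_mul_rpow_sub_one_le hp (runningMean_nonneg hb (n + 1)) (runningMean_nonneg hb n)
    simp only [g, hb_eq, Nat.cast_succ]
    linear_combination (n : ℝ) * young - p * (n + 1) * hx
  have hgN : 0 ≤ g N := mul_nonneg N.cast_nonneg (Real.rpow_nonneg (runningMean_nonneg hb N) p)
  have hsum := sum_le_sum fun n (_ : n ∈ range N) => step n
  rw [sum_add_distrib, sum_range_sub, ← mul_sum, ← mul_sum] at hsum
  simp only [g, CharP.cast_eq_zero, zero_mul, sub_zero] at hsum hgN
  linarith

theorem hardy_inequality_sum_range {p : ℝ} (hp : 1 < p) (hb : ∀ n, 0 ≤ b n) (N : ℕ) :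
    ((p - 1) / p) ^ p * ∑ n ∈ range N, runningMean b (n + 1) ^ p ≤ ∑ n ∈ range N, b n ^ p := by
  have hpq : p.HolderConjugate (p / (p - 1)) := .conjExponent hp
  have hp0 : 0 < p := hpq.pos
  have hM (n : ℕ) : 0 ≤ runningMean b (n + 1) := runningMean_nonneg hb (n + 1)
  have holder := Real.inner_le_Lp_mul_Lq_of_nonneg (s := range N) hpq (fun i _ => hb i)
    (fun i _ => Real.rpow_nonneg (hM i) (p - 1))
  simp only [← Real.rpow_mul (hM _), hpq.sub_one_mul_conj] at holder
  refine Real.rpow_mul_le_of_mul_le_rpow_mul_rpow hpq (div_nonneg (by linarith) hp0.le)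
    (sum_nonneg fun n _ => Real.rpow_nonneg (hM n) p)
    (sum_nonneg fun n _ => Real.rpow_nonneg (hb n) p) ?_
  rw [div_mul_eq_mul_div, div_le_iff₀ hp0, mul_comm _ p]
  exact (sub_one_mul_sum_runningMean_rpow_le hp hb N).trans (by gcongr)

end runningMean

/-- **Classical discrete Hardy inequality (general `1 < p < ∞`).** For every sequence of
non-negative reals, `∑_{n=1}^∞ a(n)^p ≥ ((p-1)/p)^p · ∑_{n=1}^∞ ((a(1) + ⋯ + a(n))/n)^p`,
understood in `[0, ∞]`. -/
theorem classical_discrete_hardy (p : ℝ) (hp : 1 < p) (a : ℕ → ℝ) (ha : ∀ n, 0 ≤ a n) :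
    ∑' n : ℕ, ENNReal.ofReal (a (n + 1) ^ p)
      ≥ ENNReal.ofReal (((p - 1) / p) ^ p) *
        ∑' n : ℕ, ENNReal.ofReal
          (((∑ i ∈ Finset.range (n + 1), a (i + 1)) / (n + 1 : ℝ)) ^ p) := by
  set b : ℕ → ℝ := fun n => a (n + 1)
  have hb (n : ℕ) : 0 ≤ b n := ha (n + 1)
  have hc : 0 ≤ ((p - 1) / p) ^ p := Real.rpow_nonneg (div_nonneg (by linarith) (by linarith)) p
  simp only [← runningMean_succ b]
  rw [ge_iff_le, ← ENNReal.tsum_mul_left]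
  simp only [← ENNReal.ofReal_mul hc]
  refine ENNReal.tsum_ofReal_le_tsum_ofReal
    (fun n => mul_nonneg hc (Real.rpow_nonneg (runningMean_nonneg hb (n + 1)) p))
    (fun n => Real.rpow_nonneg (hb n) p) fun N => ?_
  rw [← mul_sum]
  exact hardy_inequality_sum_range hp hb N
end

section
/- For 1 < p < ∞, the classical discrete Hardy inequality in sequence form (∑_{n=1}^∞ a(n)^p ≥ ((p−1)/p)^p ∑_{n=1}^∞ ((a(1)+⋯+a(n))/n)^p for all non-negative sequences a) holds if and only if the difference form holds (∑_{n=1}^∞ |φ(n) − φ(n−1)|^p ≥ ((p−1)/p)^p ∑_{n=1}^∞ |φ(n)|^p/n^p for all finitely supported φ : ℕ → ℝ with φ(0) = 0). -/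
open Finset

lemma hardy_ramp_key (p : ℝ) (hp : 1 < p)
    (hdiff : ∀ φ : ℕ → ℝ, (Function.support φ).Finite → φ 0 = 0 →
      ∑' n : ℕ, |φ (n + 1) - φ n| ^ p
        ≥ ((p - 1) / p) ^ p * ∑' n : ℕ, |φ (n + 1)| ^ p / (n + 1 : ℝ) ^ p)
    (a : ℕ → ℝ) (ha : ∀ n, 0 ≤ a n) (N : ℕ) :
    ((p - 1) / p) ^ p * ∑ n ∈ range N, ((∑ i ∈ range (n + 1), a (i + 1)) / (n + 1 : ℝ)) ^ p
      ≤ ∑ n ∈ range N, a (n + 1) ^ p := by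
  have hp0 : (0:ℝ) < p := lt_trans one_pos hp
  set T : ℝ := ∑ i ∈ range N, a (i + 1) with hT
  have hT0 : 0 ≤ T := Finset.sum_nonneg fun i _ => ha _
  set c : ℝ := ((p - 1) / p) ^ p with hc
  have hc0 : 0 ≤ c := Real.rpow_nonneg (div_nonneg (by linarith) (by linarith)) p
  -- key estimate for each ramp length M ≥ 1
  have key : ∀ M : ℕ, 1 ≤ M →
      c * ∑ n ∈ range N, ((∑ i ∈ range (n + 1), a (i + 1)) / (n + 1 : ℝ)) ^ p
        ≤ (∑ n ∈ range N, a (n + 1) ^ p) + T ^ p * (M : ℝ) ^ (1 - p) := by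
    intro M hM
    have hM0 : (0:ℝ) < (M:ℝ) := by exact_mod_cast hM
    set φ : ℕ → ℝ :=
      fun k => (∑ i ∈ range (min k N), a (i + 1)) * max 0 (1 - ((k - N : ℕ) : ℝ) / M) with hφ
    have hφdef : ∀ k, φ k
        = (∑ i ∈ range (min k N), a (i + 1)) * max 0 (1 - ((k - N : ℕ) : ℝ) / M) :=
      fun k => rfl
    have hφlow : ∀ k, k ≤ N → φ k = ∑ i ∈ range k, a (i + 1) := by
      intro k hk
      have h1 : k - N = 0 := by omega
      rw [hφdef, h1, min_eq_left hk]
      norm_num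
    have hφmid : ∀ k, N ≤ k → k ≤ N + M → φ k = T * (1 - ((k - N : ℕ) : ℝ) / M) := by
      intro k h1 h2
      have hle : ((k - N : ℕ) : ℝ) / M ≤ 1 := by
        rw [div_le_one hM0]
        exact_mod_cast (by omega : k - N ≤ M)
      rw [hφdef, min_eq_right h1, max_eq_right (by linarith)]
    have hφhigh : ∀ k, N + M ≤ k → φ k = 0 := by
      intro k hk
      have hge : (1:ℝ) ≤ ((k - N : ℕ) : ℝ) / M := by
        rw [le_div_iff₀ hM0, one_mul]
        exact_mod_cast (by omega : M ≤ k - N)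
      rw [hφdef, max_eq_left (by linarith), mul_zero]
    have hφ0 : φ 0 = 0 := by rw [hφlow 0 (by omega)]; simp
    have hsupp : (Function.support φ).Finite := by
      apply Set.Finite.subset (Set.finite_lt_nat (N + M))
      intro k hk
      rw [Function.mem_support] at hk
      rw [Set.mem_setOf_eq]
      by_contra hlt
      exact hk (hφhigh k (by omega))
    have hmain := hdiff φ hsupp hφ0
    -- compute LHS tsum
    have hdiffterm : ∀ n : ℕ, |φ (n + 1) - φ n| ^ p =
        if n < N then a (n + 1) ^ p else if n < N + M then (T / M) ^ p else 0 := by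
      intro n
      split_ifs with h1 h2
      · rw [hφlow (n+1) (by omega), hφlow n (by omega), Finset.sum_range_succ,
          add_sub_cancel_left, abs_of_nonneg (ha _)]
      · rw [hφmid (n+1) (by omega) (by omega), hφmid n (by omega) (by omega)]
        have hcast : ((n + 1 - N : ℕ) : ℝ) = ((n - N : ℕ) : ℝ) + 1 := by
          have : n + 1 - N = (n - N) + 1 := by omega
          rw [this]; push_cast; ring
        rw [hcast]
        rw [show T * (1 - (((n - N : ℕ) : ℝ) + 1) / M) - T * (1 - ((n - N : ℕ) : ℝ) / M)
            = -(T / M) by field_simp; ring]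
        rw [abs_neg, abs_of_nonneg (by positivity)]
      · rw [hφhigh (n+1) (by omega), hφhigh n (by omega)]
        simp [Real.zero_rpow (ne_of_gt hp0)]
    have hLHS : ∑' n : ℕ, |φ (n + 1) - φ n| ^ p
        = (∑ n ∈ range N, a (n + 1) ^ p) + T ^ p * (M : ℝ) ^ (1 - p) := by
      rw [tsum_eq_sum (s := range (N + M)) (by
        intro n hn
        rw [hdiffterm n]
        simp only [Finset.mem_range, not_lt] at hn
        rw [if_neg (by omega), if_neg (by omega)])]
      rw [Finset.sum_congr rfl (fun n _ => hdiffterm n), Finset.sum_range_add]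
      congr 1
      · apply Finset.sum_congr rfl
        intro n hn
        simp only [Finset.mem_range] at hn
        rw [if_pos hn]
      · have : ∀ x ∈ range M, (if N + x < N then a (N + x + 1) ^ p
            else if N + x < N + M then (T / M) ^ p else 0) = (T / M) ^ p := by
          intro x hx
          simp only [Finset.mem_range] at hx
          rw [if_neg (by omega), if_pos (by omega)]
        rw [Finset.sum_congr rfl this, Finset.sum_const, Finset.card_range, nsmul_eq_mul,
          Real.div_rpow hT0 hM0.le, Real.rpow_sub hM0, Real.rpow_one]
        field_simp
    -- lower bound for RHS tsum
    have hgterm0 : ∀ n ∉ range (N + M), |φ (n + 1)| ^ p / (n + 1 : ℝ) ^ p = 0 := by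
      intro n hn
      simp only [Finset.mem_range, not_lt] at hn
      rw [hφhigh (n+1) (by omega)]
      simp [Real.zero_rpow (ne_of_gt hp0)]
    have hRHS : ∑ n ∈ range N, ((∑ i ∈ range (n + 1), a (i + 1)) / (n + 1 : ℝ)) ^ p
        ≤ ∑' n : ℕ, |φ (n + 1)| ^ p / (n + 1 : ℝ) ^ p := by
      rw [tsum_eq_sum (s := range (N + M)) hgterm0]
      have hsub : range N ⊆ range (N + M) := Finset.range_subset_range.2 (by omega)
      calc ∑ n ∈ range N, ((∑ i ∈ range (n + 1), a (i + 1)) / (n + 1 : ℝ)) ^ p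
          = ∑ n ∈ range N, |φ (n + 1)| ^ p / (n + 1 : ℝ) ^ p := by
            apply Finset.sum_congr rfl
            intro n hn
            simp only [Finset.mem_range] at hn
            rw [hφlow (n+1) (by omega),
              abs_of_nonneg (Finset.sum_nonneg fun i _ => ha _),
              Real.div_rpow (Finset.sum_nonneg fun i _ => ha _) (by positivity)]
        _ ≤ _ := Finset.sum_le_sum_of_subset_of_nonneg hsub
            (fun n _ _ => by positivity)
    rw [ge_iff_le, hLHS] at hmain
    calc c * ∑ n ∈ range N, ((∑ i ∈ range (n + 1), a (i + 1)) / (n + 1 : ℝ)) ^ p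
        ≤ c * ∑' n : ℕ, |φ (n + 1)| ^ p / (n + 1 : ℝ) ^ p :=
          mul_le_mul_of_nonneg_left hRHS hc0
      _ ≤ _ := hmain
  -- take M → ∞
  have htend : Filter.Tendsto
      (fun M : ℕ => (∑ n ∈ range N, a (n + 1) ^ p) + T ^ p * (M : ℝ) ^ (1 - p))
      Filter.atTop (nhds ((∑ n ∈ range N, a (n + 1) ^ p) + T ^ p * 0)) := by
    apply Filter.Tendsto.const_add
    apply Filter.Tendsto.const_mul
    have h1p : (fun M : ℕ => (M : ℝ) ^ (1 - p)) = (fun x : ℝ => x ^ (-(p-1))) ∘ Nat.cast := by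
      funext M; simp [Function.comp]
    rw [h1p]
    exact (tendsto_rpow_neg_atTop (by linarith)).comp tendsto_natCast_atTop_atTop
  rw [mul_zero, add_zero] at htend
  exact ge_of_tendsto htend (Filter.eventually_atTop.2 ⟨1, fun M hM => key M hM⟩)
open Finset



/-- For `1 < p < ∞`, the classical discrete Hardy inequality in sequence form holds for all
non-negative sequences if and only if the difference form holds for all finitely supported
`φ : ℕ → ℝ` with `φ 0 = 0`. -/
theorem hardy_sequence_iff_difference (p : ℝ) (hp : 1 < p) :
    (∀ a : ℕ → ℝ, (∀ n, 0 ≤ a n) →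
      ∑' n : ℕ, ENNReal.ofReal (a (n + 1) ^ p)
        ≥ ENNReal.ofReal (((p - 1) / p) ^ p) *
          ∑' n : ℕ, ENNReal.ofReal
            (((∑ i ∈ Finset.range (n + 1), a (i + 1)) / (n + 1 : ℝ)) ^ p))
    ↔ (∀ φ : ℕ → ℝ, (Function.support φ).Finite → φ 0 = 0 →
      ∑' n : ℕ, |φ (n + 1) - φ n| ^ p
        ≥ ((p - 1) / p) ^ p * ∑' n : ℕ, |φ (n + 1)| ^ p / (n + 1 : ℝ) ^ p) := by
  have hp0 : (0:ℝ) < p := lt_trans one_pos hp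
  have hc0 : (0:ℝ) ≤ ((p - 1) / p) ^ p :=
    Real.rpow_nonneg (div_nonneg (by linarith) (by linarith)) p
  constructor
  · -- sequence form → difference form
    intro h φ hfin h0
    obtain ⟨K, hK⟩ : ∃ K, ∀ m, K ≤ m → φ m = 0 := by
      refine ⟨hfin.toFinset.sup id + 1, fun m hm => ?_⟩
      by_contra hne
      have hmem : m ∈ hfin.toFinset := by simpa using hne
      have := Finset.le_sup (f := id) hmem
      simp only [id_eq] at this
      omega
    set a : ℕ → ℝ := fun k => |φ k - φ (k - 1)| with ha'
    have ha : ∀ n, 0 ≤ a n := fun n => abs_nonneg _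
    have hsucc : ∀ n : ℕ, a (n + 1) = |φ (n + 1) - φ n| := fun n => by
      simp only [ha', Nat.add_sub_cancel]
    have hkey := h a ha
    have hfnn : ∀ n : ℕ, (0:ℝ) ≤ |φ (n + 1) - φ n| ^ p := fun n => by positivity
    have hgnn : ∀ n : ℕ, (0:ℝ) ≤ |φ (n + 1)| ^ p / (n + 1 : ℝ) ^ p := fun n => by positivity
    have hf0 : ∀ n ∉ Finset.range K, |φ (n + 1) - φ n| ^ p = 0 := by
      intro n hn
      simp only [Finset.mem_range, not_lt] at hn
      rw [hK (n + 1) (by omega), hK n hn, sub_zero, abs_zero,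
        Real.zero_rpow (ne_of_gt hp0)]
    have hg0 : ∀ n ∉ Finset.range K, |φ (n + 1)| ^ p / (n + 1 : ℝ) ^ p = 0 := by
      intro n hn
      simp only [Finset.mem_range, not_lt] at hn
      rw [hK (n + 1) (by omega), abs_zero, Real.zero_rpow (ne_of_gt hp0), zero_div]
    have hsumf : Summable fun n : ℕ => |φ (n + 1) - φ n| ^ p :=
      summable_of_ne_finset_zero hf0
    have hsumg : Summable fun n : ℕ => |φ (n + 1)| ^ p / (n + 1 : ℝ) ^ p :=
      summable_of_ne_finset_zero hg0
    have hterm : ∀ n : ℕ, ENNReal.ofReal (|φ (n + 1)| ^ p / (n + 1 : ℝ) ^ p)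
        ≤ ENNReal.ofReal (((∑ i ∈ Finset.range (n + 1), a (i + 1)) / (n + 1 : ℝ)) ^ p) := by
      intro n
      apply ENNReal.ofReal_le_ofReal
      have hA0 : (0:ℝ) ≤ ∑ i ∈ Finset.range (n + 1), a (i + 1) :=
        Finset.sum_nonneg fun i _ => ha _
      have hA : |φ (n + 1)| ≤ ∑ i ∈ Finset.range (n + 1), a (i + 1) := by
        calc |φ (n + 1)| = |∑ i ∈ Finset.range (n + 1), (φ (i + 1) - φ i)| := by
              rw [Finset.sum_range_sub, h0, sub_zero]
          _ ≤ ∑ i ∈ Finset.range (n + 1), |φ (i + 1) - φ i| :=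
              Finset.abs_sum_le_sum_abs _ _
          _ = ∑ i ∈ Finset.range (n + 1), a (i + 1) := by
              exact Finset.sum_congr rfl fun i _ => (hsucc i).symm
      rw [Real.div_rpow hA0 (by positivity)]
      gcongr
    have h1 : ENNReal.ofReal (((p - 1) / p) ^ p
          * ∑' n : ℕ, |φ (n + 1)| ^ p / (n + 1 : ℝ) ^ p)
        ≤ ENNReal.ofReal (∑' n : ℕ, |φ (n + 1) - φ n| ^ p) := by
      rw [ENNReal.ofReal_mul hc0, ENNReal.ofReal_tsum_of_nonneg hgnn hsumg,
        ENNReal.ofReal_tsum_of_nonneg hfnn hsumf]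
      calc ENNReal.ofReal (((p - 1) / p) ^ p)
            * ∑' n : ℕ, ENNReal.ofReal (|φ (n + 1)| ^ p / (n + 1 : ℝ) ^ p)
          ≤ ENNReal.ofReal (((p - 1) / p) ^ p) * ∑' n : ℕ, ENNReal.ofReal
              (((∑ i ∈ Finset.range (n + 1), a (i + 1)) / (n + 1 : ℝ)) ^ p) :=
            mul_le_mul' le_rfl (ENNReal.tsum_le_tsum hterm)
        _ ≤ ∑' n : ℕ, ENNReal.ofReal (a (n + 1) ^ p) := hkey
        _ = ∑' n : ℕ, ENNReal.ofReal (|φ (n + 1) - φ n| ^ p) :=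
            tsum_congr fun n => by rw [hsucc]
    exact (ENNReal.ofReal_le_ofReal_iff (tsum_nonneg hfnn)).1 h1
  · -- difference form → sequence form
    intro h a ha
    rw [ge_iff_le, ENNReal.tsum_eq_iSup_nat
      (f := fun n : ℕ => ENNReal.ofReal
        (((∑ i ∈ Finset.range (n + 1), a (i + 1)) / (n + 1 : ℝ)) ^ p)),
      ENNReal.mul_iSup]
    apply iSup_le
    intro N
    have hreal := hardy_ramp_key p hp h a ha N
    calc ENNReal.ofReal (((p - 1) / p) ^ p) * ∑ n ∈ Finset.range N, ENNReal.ofReal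
          (((∑ i ∈ Finset.range (n + 1), a (i + 1)) / (n + 1 : ℝ)) ^ p)
        = ENNReal.ofReal (((p - 1) / p) ^ p
            * ∑ n ∈ Finset.range N, ((∑ i ∈ Finset.range (n + 1), a (i + 1)) / (n + 1 : ℝ)) ^ p) := by
          rw [ENNReal.ofReal_mul hc0, ENNReal.ofReal_sum_of_nonneg (fun n _ =>
            Real.rpow_nonneg (div_nonneg (Finset.sum_nonneg fun i _ => ha _)
              (by positivity)) p)]
      _ ≤ ENNReal.ofReal (∑ n ∈ Finset.range N, a (n + 1) ^ p) :=
          ENNReal.ofReal_le_ofReal hreal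
      _ = ∑ n ∈ Finset.range N, ENNReal.ofReal (a (n + 1) ^ p) :=
          ENNReal.ofReal_sum_of_nonneg (fun n _ => Real.rpow_nonneg (ha _) p)
      _ ≤ ∑' n : ℕ, ENNReal.ofReal (a (n + 1) ^ p) := ENNReal.sum_le_tsum _
end
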